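/- Lemma 3D: let f : A ⊢ B be an arrow term of DS, and for i ∈ {1,2} let x_i in A and y_i in B be occurrences of the letter p_i that are linked in f. If A has a subformula occurrence A₁ ∨ A₂ such that x_i occurs in A_i, then B has a subformula occurrence B₁ ∨ B₂ or B₂ ∨ B₁ such that y_i occurs in B_i. -/

import Mathlib

/-! ### The category Br of Brauerian split equivalences of finite ordinals

An arrow `m ⊢ n` of `Br` is represented as a relation on `ℕ ⊕ ℕ`, where
`Sum.inl i` (with `i < m`) is the source copy `i_s` and `Sum.inr j`
(with `j < n`) is the target copy `j_t`. -/

abbrev GRel : Type := (ℕ ⊕ ℕ) → (ℕ ⊕ ℕ) → Prop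

/-- The identity arrow of `Br` on `n`: transversals `{i_s, i_t}` for `i < n`. -/
def gId (n : ℕ) : GRel := fun u v =>
  ∃ i, i < n ∧ (u = Sum.inl i ∨ u = Sum.inr i) ∧ (v = Sum.inl i ∨ v = Sum.inr i)

/-- The Brauerian split equivalence whose transversals are `{i_s, (φ i)_t}` for `i < m`. -/
def gFun (m : ℕ) (φ : ℕ → ℕ) : GRel := fun u v =>
  ∃ i, i < m ∧ (u = Sum.inl i ∨ u = Sum.inr (φ i)) ∧ (v = Sum.inl i ∨ v = Sum.inr (φ i))

/-- The block transposition exchanging the first `a` and the last `b` elements. -/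
def gSwap (a b : ℕ) : GRel :=
  gFun (a + b) (fun i => if i < a then i + b else i - a)

/-- `G Δ̂∧_{B,A}` with `a = GA`, `b = GB`: identity transversals on the stem `A`
together with caps joining the two copies of each letter occurrence of `B` in
the crown `¬B ∨ B` of the target. -/
def gDelta (a b : ℕ) : GRel := fun u v =>
  (∃ i, i < a ∧ (u = Sum.inl i ∨ u = Sum.inr i) ∧ (v = Sum.inl i ∨ v = Sum.inr i)) ∨
  (∃ j, j < b ∧ (u = Sum.inr (a + j) ∨ u = Sum.inr (a + b + j)) ∧
                (v = Sum.inr (a + j) ∨ v = Sum.inr (a + b + j)))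

/-- `G Σ̂∨_{B,A}` with `a = GA`, `b = GB`: identity transversals on the stem `A`
together with cups joining the two copies of each letter occurrence of `B` in
the crown `B ∧ ¬B` of the source. -/
def gSigma (a b : ℕ) : GRel := fun u v =>
  (∃ i, i < a ∧ (u = Sum.inl (2*b + i) ∨ u = Sum.inr i) ∧
                (v = Sum.inl (2*b + i) ∨ v = Sum.inr i)) ∨
  (∃ j, j < b ∧ (u = Sum.inl j ∨ u = Sum.inl (b + j)) ∧
                (v = Sum.inl j ∨ v = Sum.inl (b + j)))

/-- Composition `P ∗ R` in `Br`: glue along the middle copy and take the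
transitive closure, restricted to the outer copies. -/
def gComp (Pr R : GRel) : GRel := fun u v =>
  Relation.TransGen
    (fun x y : ℕ ⊕ ℕ ⊕ ℕ =>
      (∃ x' y', Sum.map id Sum.inl x' = x ∧ Sum.map id Sum.inl y' = y ∧ R x' y') ∨
      (∃ x' y', Sum.inr x' = x ∧ Sum.inr y' = y ∧ Pr x' y'))
    (Sum.map id Sum.inr u) (Sum.map id Sum.inr v)

/-- Shift a split relation by `a` on the source side and by `d` on the target side. -/
def gShift (a d : ℕ) (R : GRel) : GRel := fun u v =>
  ∃ u' v', R u' v' ∧ u = Sum.map (· + a) (· + d) u' ∧ v = Sum.map (· + a) (· + d) v'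

/-- Disjoint union of split relations: `G(f ξ g) = Gf ∪ Gg_{+GD}^{+GA}`. -/
def gPar (a d : ℕ) (R S : GRel) : GRel := fun u v => R u v ∨ gShift a d S u v
/-! ### The language L∧,∨ generated from the set `P` of letters -/

inductive Form (P : Type) : Type
  | letter : P → Form P
  | conj : Form P → Form P → Form P
  | disj : Form P → Form P → Form P

infixr:70 " ⋏ " => Form.conj
infixr:66 " ⋎ " => Form.disj

/-- The number of occurrences of letters in a formula (the object map of `G`). -/
def Form.size {P : Type} : Form P → ℕ
  | .letter _ => 1
  | .conj A B => A.size + B.size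
  | .disj A B => A.size + B.size
/-! ### Arrow terms of the free symmetric net category DS -/

inductive Term (P : Type) : Form P → Form P → Type
  | id (A : Form P) : Term P A A
  | comp {A B C : Form P} : Term P B C → Term P A B → Term P A C
  | conj {A B D E : Form P} : Term P A D → Term P B E → Term P (A ⋏ B) (D ⋏ E)
  | disj {A B D E : Form P} : Term P A D → Term P B E → Term P (A ⋎ B) (D ⋎ E)
  | bConjTo (A B C : Form P) : Term P (A ⋏ (B ⋏ C)) ((A ⋏ B) ⋏ C)
  | bConjFrom (A B C : Form P) : Term P ((A ⋏ B) ⋏ C) (A ⋏ (B ⋏ C))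
  | bDisjTo (A B C : Form P) : Term P (A ⋎ (B ⋎ C)) ((A ⋎ B) ⋎ C)
  | bDisjFrom (A B C : Form P) : Term P ((A ⋎ B) ⋎ C) (A ⋎ (B ⋎ C))
  | cConj (A B : Form P) : Term P (A ⋏ B) (B ⋏ A)
  | cDisj (A B : Form P) : Term P (B ⋎ A) (A ⋎ B)
  | d (A B C : Form P) : Term P (A ⋏ (B ⋎ C)) ((A ⋏ B) ⋎ C)

infixr:80 " ⬝ " => Term.comp
infixr:70 " ⊼ " => Term.conj
infixr:66 " ⊽ " => Term.disj

/-- The arrow `d^R_{C,B,A} : (C∨B)∧A ⊢ C∨(B∧A)`. -/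
def dR {P : Type} (C B A : Form P) : Term P ((C ⋎ B) ⋏ A) (C ⋎ (B ⋏ A)) :=
  Term.cDisj C (B ⋏ A) ⬝ ((Term.cConj A B ⊽ Term.id C) ⬝
    (Term.d A B C ⬝ ((Term.id A ⊼ Term.cDisj B C) ⬝ Term.cConj (C ⋎ B) A)))
/-! ### The equations of DS, imposed on arrow terms -/

inductive Eqv {P : Type} : ∀ {A B : Form P}, Term P A B → Term P A B → Prop
  -- equivalence and congruence
  | refl {A B : Form P} (f : Term P A B) : Eqv f f
  | symm {A B : Form P} {f g : Term P A B} : Eqv f g → Eqv g f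
  | trans {A B : Form P} {f g h : Term P A B} : Eqv f g → Eqv g h → Eqv f h
  | congComp {A B C : Form P} {g g' : Term P B C} {f f' : Term P A B} :
      Eqv g g' → Eqv f f' → Eqv (g ⬝ f) (g' ⬝ f')
  | congConj {A B D E : Form P} {f f' : Term P A D} {g g' : Term P B E} :
      Eqv f f' → Eqv g g' → Eqv (f ⊼ g) (f' ⊼ g')
  | congDisj {A B D E : Form P} {f f' : Term P A D} {g g' : Term P B E} :
      Eqv f f' → Eqv g g' → Eqv (f ⊽ g) (f' ⊽ g')
  -- (cat 1), (cat 2)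
  | catIdR {A B : Form P} (f : Term P A B) : Eqv (f ⬝ Term.id A) f
  | catIdL {A B : Form P} (f : Term P A B) : Eqv (Term.id B ⬝ f) f
  | catAssoc {A B C D : Form P} (f : Term P A B) (g : Term P B C) (h : Term P C D) :
      Eqv (h ⬝ (g ⬝ f)) ((h ⬝ g) ⬝ f)
  -- bifunctorial equations (ξ 1), (ξ 2)
  | conjOne (A B : Form P) : Eqv (Term.id A ⊼ Term.id B) (Term.id (A ⋏ B))
  | disjOne (A B : Form P) : Eqv (Term.id A ⊽ Term.id B) (Term.id (A ⋎ B))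
  | conjTwo {A₁ B₁ C₁ A₂ B₂ C₂ : Form P} (g₁ : Term P B₁ C₁) (f₁ : Term P A₁ B₁)
      (g₂ : Term P B₂ C₂) (f₂ : Term P A₂ B₂) :
      Eqv ((g₁ ⬝ f₁) ⊼ (g₂ ⬝ f₂)) ((g₁ ⊼ g₂) ⬝ (f₁ ⊼ f₂))
  | disjTwo {A₁ B₁ C₁ A₂ B₂ C₂ : Form P} (g₁ : Term P B₁ C₁) (f₁ : Term P A₁ B₁)
      (g₂ : Term P B₂ C₂) (f₂ : Term P A₂ B₂) :
      Eqv ((g₁ ⬝ f₁) ⊽ (g₂ ⬝ f₂)) ((g₁ ⊽ g₂) ⬝ (f₁ ⊽ f₂))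
  -- naturality equations
  | bConjNat {A B C D E F : Form P} (f : Term P A D) (g : Term P B E) (h : Term P C F) :
      Eqv (((f ⊼ g) ⊼ h) ⬝ Term.bConjTo A B C) (Term.bConjTo D E F ⬝ (f ⊼ (g ⊼ h)))
  | bDisjNat {A B C D E F : Form P} (f : Term P A D) (g : Term P B E) (h : Term P C F) :
      Eqv (((f ⊽ g) ⊽ h) ⬝ Term.bDisjTo A B C) (Term.bDisjTo D E F ⬝ (f ⊽ (g ⊽ h)))
  | cConjNat {A B D E : Form P} (f : Term P A D) (g : Term P B E) :
      Eqv ((g ⊼ f) ⬝ Term.cConj A B) (Term.cConj D E ⬝ (f ⊼ g))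
  | cDisjNat {A B D E : Form P} (f : Term P A D) (g : Term P B E) :
      Eqv ((g ⊽ f) ⬝ Term.cDisj B A) (Term.cDisj E D ⬝ (f ⊽ g))
  | dNat {A B C D E F : Form P} (f : Term P A D) (g : Term P B E) (h : Term P C F) :
      Eqv (((f ⊼ g) ⊽ h) ⬝ Term.d A B C) (Term.d D E F ⬝ (f ⊼ (g ⊽ h)))
  -- (b̂ξ b̂ξ)
  | bConjIso₁ (A B C : Form P) :
      Eqv (Term.bConjFrom A B C ⬝ Term.bConjTo A B C) (Term.id (A ⋏ (B ⋏ C)))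
  | bConjIso₂ (A B C : Form P) :
      Eqv (Term.bConjTo A B C ⬝ Term.bConjFrom A B C) (Term.id ((A ⋏ B) ⋏ C))
  | bDisjIso₁ (A B C : Form P) :
      Eqv (Term.bDisjFrom A B C ⬝ Term.bDisjTo A B C) (Term.id (A ⋎ (B ⋎ C)))
  | bDisjIso₂ (A B C : Form P) :
      Eqv (Term.bDisjTo A B C ⬝ Term.bDisjFrom A B C) (Term.id ((A ⋎ B) ⋎ C))
  -- (b̂ξ 5)
  | bConjPent (A B C D : Form P) :
      Eqv (Term.bConjFrom A B (C ⋏ D) ⬝ Term.bConjFrom (A ⋏ B) C D)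
        ((Term.id A ⊼ Term.bConjFrom B C D) ⬝
          (Term.bConjFrom A (B ⋏ C) D ⬝ (Term.bConjFrom A B C ⊼ Term.id D)))
  | bDisjPent (A B C D : Form P) :
      Eqv (Term.bDisjFrom A B (C ⋎ D) ⬝ Term.bDisjFrom (A ⋎ B) C D)
        ((Term.id A ⊽ Term.bDisjFrom B C D) ⬝
          (Term.bDisjFrom A (B ⋎ C) D ⬝ (Term.bDisjFrom A B C ⊽ Term.id D)))
  -- (ĉ∧ ĉ∧), (ĉ∨ ĉ∨)
  | cConjIso (A B : Form P) : Eqv (Term.cConj B A ⬝ Term.cConj A B) (Term.id (A ⋏ B))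
  | cDisjIso (A B : Form P) : Eqv (Term.cDisj A B ⬝ Term.cDisj B A) (Term.id (A ⋎ B))
  -- (b̂∧ ĉ∧), (b̂∨ ĉ∨)
  | bcConj (A B C : Form P) :
      Eqv ((Term.id B ⊼ Term.cConj C A) ⬝ (Term.bConjFrom B C A ⬝
            (Term.cConj A (B ⋏ C) ⬝ (Term.bConjFrom A B C ⬝ (Term.cConj B A ⊼ Term.id C)))))
        (Term.bConjFrom B A C)
  | bcDisj (A B C : Form P) :
      Eqv ((Term.id B ⊽ Term.cDisj A C) ⬝ (Term.bDisjFrom B C A ⬝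
            (Term.cDisj (B ⋎ C) A ⬝ (Term.bDisjFrom A B C ⬝ (Term.cDisj A B ⊽ Term.id C)))))
        (Term.bDisjFrom B A C)
  -- (d ∧), (d ∨)
  | dConj (A B C D : Form P) :
      Eqv ((Term.bConjFrom A B C ⊽ Term.id D) ⬝ Term.d (A ⋏ B) C D)
        (Term.d A (B ⋏ C) D ⬝ ((Term.id A ⊼ Term.d B C D) ⬝ Term.bConjFrom A B (C ⋎ D)))
  | dDisj (D C B A : Form P) :
      Eqv (Term.d D C (B ⋎ A) ⬝ (Term.id D ⊼ Term.bDisjFrom C B A))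
        (Term.bDisjFrom (D ⋏ C) B A ⬝ ((Term.d D C B ⊽ Term.id A) ⬝ Term.d D (C ⋎ B) A))
  -- (d b̂∧), (d b̂∨)
  | dBConj (A B C D : Form P) :
      Eqv (dR (A ⋏ B) C D ⬝ (Term.d A B C ⊼ Term.id D))
        (Term.d A B (C ⋏ D) ⬝ ((Term.id A ⊼ dR B C D) ⬝ Term.bConjFrom A (B ⋎ C) D))
  | dBDisj (D C B A : Form P) :
      Eqv ((Term.id D ⊽ Term.d C B A) ⬝ dR D C (B ⋎ A))
        (Term.bDisjFrom D (C ⋏ B) A ⬝ ((dR D C B ⊽ Term.id A) ⬝ Term.d (D ⋎ C) B A))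
/-- The functor `G` from DS to Br on arrow terms. -/
def Term.G {P : Type} : ∀ {A B : Form P}, Term P A B → GRel
  | _, _, .id A => gId A.size
  | _, _, .comp g f => gComp (Term.G g) (Term.G f)
  | _, _, @Term.conj _ A _ D _ f g => gPar A.size D.size (Term.G f) (Term.G g)
  | _, _, @Term.disj _ A _ D _ f g => gPar A.size D.size (Term.G f) (Term.G g)
  | _, _, .bConjTo A B C => gId (A.size + (B.size + C.size))
  | _, _, .bConjFrom A B C => gId (A.size + B.size + C.size)
  | _, _, .bDisjTo A B C => gId (A.size + (B.size + C.size))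
  | _, _, .bDisjFrom A B C => gId (A.size + B.size + C.size)
  | _, _, .cConj A B => gSwap A.size B.size
  | _, _, .cDisj A B => gSwap B.size A.size
  | _, _, .d A B C => gId (A.size + (B.size + C.size))
/-! ### Occurrences of letters and subformula occurrences -/

/-- The letter at the `(n+1)`-th letter-occurrence position of a formula
(`n` counted from `0`, from the left). -/
def Form.letterAt {P : Type} : Form P → ℕ → Option P
  | .letter p, 0 => some p
  | .letter _, _ + 1 => none
  | .conj A B, n => if n < A.size then A.letterAt n else B.letterAt (n - A.size)
  | .disj A B, n => if n < A.size then A.letterAt n else B.letterAt (n - A.size)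

/-- Directions for addressing subformula occurrences. -/
inductive Dir : Type
  | l
  | r
deriving DecidableEq

/-- The subformula occurrence of a formula at a given position (path). -/
def Form.subAt {P : Type} : Form P → List Dir → Option (Form P)
  | A, [] => some A
  | .conj A _, .l :: π => A.subAt π
  | .conj _ B, .r :: π => B.subAt π
  | .disj A _, .l :: π => A.subAt π
  | .disj _ B, .r :: π => B.subAt π
  | .letter _, _ :: _ => none

/-- The number of letter occurrences strictly to the left of the subformula
occurrence at a given position. -/
def Form.offsetAt {P : Type} : Form P → List Dir → ℕ
  | _, [] => 0
  | .conj A _, .l :: π => A.offsetAt π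
  | .conj A B, .r :: π => A.size + B.offsetAt π
  | .disj A _, .l :: π => A.offsetAt π
  | .disj A B, .r :: π => A.size + B.offsetAt π
  | .letter _, _ :: _ => 0

/-- The `(n+1)`-th occurrence of a letter in `A` is *linked* in `f : A ⊢ B` to the
`(m+1)`-th occurrence of the same letter in `B` when `{n_s, m_t}` is a member of
the partition corresponding to `Gf`. -/
def Linked {P : Type} {A B : Form P} (f : Term P A B) (n m : ℕ) : Prop :=
  Term.G f (Sum.inl n) (Sum.inr m)

/-! `Gf` is the graph of a bijection `f.perm` of letter occurrences, since DS has no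
cups or caps; in a composite every point of the middle ordinal lies on exactly one
thread `i — φ i — ψ (φ i)`. Reading occurrences by their indices, "`x₁` in `A₁` and
`x₂` in `A₂` for a subformula occurrence `A₁ ∨ A₂`" becomes the relation `SepByDisj`,
and each primitive arrow of DS carries a `SepByDisj` pair to one, possibly with the
two sides exchanged: associativity and `d` keep a disjunction above the two
occurrences where they part, and `ĉ∨` only flips its sides. -/

open Set

def sumMap (a d : ℕ) (φ ψ : ℕ → ℕ) (i : ℕ) : ℕ :=
  if i < a then φ i else d + ψ (i - a)

def blockSwap (a b i : ℕ) : ℕ :=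
  if i < a then i + b else i - a

section Maps

variable {a b d e : ℕ} {φ ψ : ℕ → ℕ}

lemma sumMap_of_lt {i : ℕ} (hi : i < a) : sumMap a d φ ψ i = φ i := if_pos hi

lemma sumMap_add (k : ℕ) : sumMap a d φ ψ (a + k) = d + ψ k := by
  simp [sumMap]

lemma blockSwap_of_lt {i : ℕ} (hi : i < a) : blockSwap a b i = i + b := if_pos hi

lemma blockSwap_add (k : ℕ) : blockSwap a b (a + k) = k := by
  simp [blockSwap]

lemma bijOn_sumMap (hφ : BijOn φ (Iio a) (Iio d)) (hψ : BijOn ψ (Iio b) (Iio e)) :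
    BijOn (sumMap a d φ ψ) (Iio (a + b)) (Iio (d + e)) := by
  have lt_or_add : ∀ i, i < a ∨ ∃ k, i = a + k := fun i => by
    rcases lt_or_ge i a with h | h
    · exact .inl h
    · exact .inr ⟨i - a, by omega⟩
  refine ⟨fun i (hi : i < a + b) => ?_, fun i (hi : i < a + b) i' (hi' : i' < a + b) he => ?_,
    fun j (hj : j < d + e) => ?_⟩
  · change sumMap a d φ ψ i < d + e
    rcases lt_or_add i with h | ⟨k, rfl⟩
    · have : φ i < d := hφ.mapsTo h
      rw [sumMap_of_lt h]; omega
    · have : ψ k < e := hψ.mapsTo (show k < b by omega)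
      rw [sumMap_add]; omega
  · rcases lt_or_add i with h | ⟨k, rfl⟩ <;> rcases lt_or_add i' with h' | ⟨k', rfl⟩
    · rw [sumMap_of_lt h, sumMap_of_lt h'] at he
      exact hφ.injOn h h' he
    · have : φ i < d := hφ.mapsTo h
      rw [sumMap_of_lt h, sumMap_add] at he; omega
    · have : φ i' < d := hφ.mapsTo h'
      rw [sumMap_of_lt h', sumMap_add] at he; omega
    · rw [sumMap_add, sumMap_add] at he
      rw [hψ.injOn (show k < b by omega) (show k' < b by omega) (by omega)]
  · rcases lt_or_ge j d with h | h
    · obtain ⟨i, hi : i < a, rfl⟩ := hφ.surjOn h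
      exact ⟨i, show i < a + b by omega, sumMap_of_lt hi⟩
    · obtain ⟨k, hk : k < b, hkj⟩ := hψ.surjOn (show j - d < e by omega)
      exact ⟨a + k, show a + k < a + b by omega, by rw [sumMap_add, hkj]; omega⟩

lemma bijOn_blockSwap (a b : ℕ) : BijOn (blockSwap a b) (Iio (a + b)) (Iio (b + a)) := by
  refine ⟨fun i hi => ?_, fun i hi i' hi' he => ?_, fun j hj => ?_⟩ <;>
    simp only [blockSwap, mem_Iio, mem_image] at *
  · split <;> omega
  · split at he <;> split at he <;> omega
  · rcases lt_or_ge j b with h | h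
    · exact ⟨j + a, by omega, by simp⟩
    · exact ⟨j - b, by omega, by rw [if_pos (by omega)]; omega⟩

end Maps

section Br

variable {a b d : ℕ} {φ ψ : ℕ → ℕ}

lemma gFun_inl_inr {n m : ℕ} : gFun a φ (.inl n) (.inr m) ↔ n < a ∧ m = φ n := by
  simp [gFun]

lemma gPar_gFun : gPar a d (gFun a φ) (gFun b ψ) = gFun (a + b) (sumMap a d φ ψ) := by
  funext u v
  apply propext
  constructor
  · rintro (⟨i, hi, hu, hv⟩ | ⟨u', v', ⟨k, hk, hu, hv⟩, rfl, rfl⟩)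
    · exact ⟨i, by omega, by rwa [sumMap_of_lt hi], by rwa [sumMap_of_lt hi]⟩
    · refine ⟨a + k, by omega, ?_, ?_⟩ <;> rw [sumMap_add]
      · rcases hu with rfl | rfl <;> simp [add_comm]
      · rcases hv with rfl | rfl <;> simp [add_comm]
  · rintro ⟨i, hi, hu, hv⟩
    rcases lt_or_ge i a with h | h
    · rw [sumMap_of_lt h] at hu hv
      exact .inl ⟨i, h, hu, hv⟩
    · obtain ⟨k, rfl⟩ : ∃ k, i = a + k := ⟨i - a, by omega⟩
      rw [sumMap_add] at hu hv
      have ends : ∀ w, w = .inl (a + k) ∨ w = .inr (d + ψ k) →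
          ∃ w', (w' = .inl k ∨ w' = .inr (ψ k)) ∧ w = Sum.map (· + a) (· + d) w' := by
        rintro w (rfl | rfl)
        · exact ⟨.inl k, .inl rfl, by simp [add_comm]⟩
        · exact ⟨.inr (ψ k), .inr rfl, by simp [add_comm]⟩
      obtain ⟨u', hu', rfl⟩ := ends u hu
      obtain ⟨v', hv', rfl⟩ := ends v hv
      exact .inr ⟨u', v', ⟨k, by omega, hu', hv'⟩, rfl, rfl⟩

/-- `gComp Pr R` is the transitive closure of this relation on `ℕ ⊕ ℕ ⊕ ℕ`, read as
source of `R` ⊕ middle ⊕ target of `Pr`. -/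
def gCompStep (Pr R : GRel) (x y : ℕ ⊕ ℕ ⊕ ℕ) : Prop :=
  (∃ x' y', Sum.map id Sum.inl x' = x ∧ Sum.map id Sum.inl y' = y ∧ R x' y') ∨
  (∃ x' y', Sum.inr x' = x ∧ Sum.inr y' = y ∧ Pr x' y')

def thread (φ ψ : ℕ → ℕ) (i : ℕ) : Set (ℕ ⊕ ℕ ⊕ ℕ) :=
  {.inl i, .inr (.inl (φ i)), .inr (.inr (ψ (φ i)))}

lemma eq_of_mem_thread (hφ : InjOn φ (Iio a)) (hψφ : InjOn (ψ ∘ φ) (Iio a))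
    {i i' : ℕ} (hi : i < a) (hi' : i' < a) {x : ℕ ⊕ ℕ ⊕ ℕ}
    (hx : x ∈ thread φ ψ i) (hx' : x ∈ thread φ ψ i') : i = i' := by
  simp only [thread, mem_insert_iff, mem_singleton_iff] at hx hx'
  rcases hx with rfl | rfl | rfl <;>
    simp only [reduceCtorEq, Sum.inl.injEq, Sum.inr.injEq, or_false, false_or] at hx'
  · exact hx'
  · exact hφ hi hi' hx'
  · exact hψφ hi hi' hx'

lemma exists_thread_of_gCompStep (hφ : SurjOn φ (Iio a) (Iio b)) {x y : ℕ ⊕ ℕ ⊕ ℕ}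
    (h : gCompStep (gFun b ψ) (gFun a φ) x y) :
    ∃ i < a, x ∈ thread φ ψ i ∧ y ∈ thread φ ψ i := by
  rcases h with ⟨x', y', rfl, rfl, i, hi, hx, hy⟩ | ⟨x', y', rfl, rfl, j, hj, hx, hy⟩
  · refine ⟨i, hi, ?_, ?_⟩
    · rcases hx with rfl | rfl <;> simp [thread]
    · rcases hy with rfl | rfl <;> simp [thread]
  · obtain ⟨i, hi, rfl⟩ := hφ hj
    refine ⟨i, hi, ?_, ?_⟩
    · rcases hx with rfl | rfl <;> simp [thread]
    · rcases hy with rfl | rfl <;> simp [thread]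

/-- Any two points of a thread are joined through its middle point. -/
lemma transGen_gCompStep_of_mem_thread (hφ : MapsTo φ (Iio a) (Iio b)) {i : ℕ} (hi : i < a)
    {x y : ℕ ⊕ ℕ ⊕ ℕ} (hx : x ∈ thread φ ψ i) (hy : y ∈ thread φ ψ i) :
    Relation.TransGen (gCompStep (gFun b ψ) (gFun a φ)) x y := by
  have hφi : φ i < b := hφ hi
  have to_mid : gCompStep (gFun b ψ) (gFun a φ) x (.inr (.inl (φ i))) := by
    simp only [thread, mem_insert_iff, mem_singleton_iff] at hx
    rcases hx with rfl | rfl | rfl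
    · exact .inl ⟨.inl i, .inr (φ i), rfl, rfl, i, hi, .inl rfl, .inr rfl⟩
    · exact .inr ⟨.inl (φ i), .inl (φ i), rfl, rfl, φ i, hφi, .inl rfl, .inl rfl⟩
    · exact .inr ⟨.inr (ψ (φ i)), .inl (φ i), rfl, rfl, φ i, hφi, .inr rfl, .inl rfl⟩
  have from_mid : gCompStep (gFun b ψ) (gFun a φ) (.inr (.inl (φ i))) y := by
    simp only [thread, mem_insert_iff, mem_singleton_iff] at hy
    rcases hy with rfl | rfl | rfl
    · exact .inl ⟨.inr (φ i), .inl i, rfl, rfl, i, hi, .inr rfl, .inl rfl⟩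
    · exact .inr ⟨.inl (φ i), .inl (φ i), rfl, rfl, φ i, hφi, .inl rfl, .inl rfl⟩
    · exact .inr ⟨.inl (φ i), .inr (ψ (φ i)), rfl, rfl, φ i, hφi, .inl rfl, .inr rfl⟩
  exact .head to_mid (.single from_mid)

lemma map_inr_mem_thread {i : ℕ} {u : ℕ ⊕ ℕ} :
    Sum.map id Sum.inr u ∈ thread φ ψ i ↔ u = .inl i ∨ u = .inr (ψ (φ i)) := by
  cases u <;> simp [thread]

lemma gComp_gFun (hφ : BijOn φ (Iio a) (Iio b)) (hψ : InjOn ψ (Iio b)) :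
    gComp (gFun b ψ) (gFun a φ) = gFun a (ψ ∘ φ) := by
  let SameThread (x y : ℕ ⊕ ℕ ⊕ ℕ) : Prop := ∃ i < a, x ∈ thread φ ψ i ∧ y ∈ thread φ ψ i
  have : IsTrans _ SameThread := ⟨by
    rintro x y z ⟨i, hi, hx, hy⟩ ⟨i', hi', hy', hz⟩
    obtain rfl := eq_of_mem_thread hφ.injOn (hψ.comp hφ.injOn hφ.mapsTo) hi hi' hy hy'
    exact ⟨i, hi, hx, hz⟩⟩
  funext u v
  apply propext
  constructor
  · intro h
    obtain ⟨i, hi, hu, hv⟩ : SameThread _ _ :=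
      Relation.transGen_minimal (fun _ _ => exists_thread_of_gCompStep hφ.surjOn) _ _ h
    exact ⟨i, hi, map_inr_mem_thread.1 hu, map_inr_mem_thread.1 hv⟩
  · rintro ⟨i, hi, hu, hv⟩
    exact transGen_gCompStep_of_mem_thread hφ.mapsTo hi
      (map_inr_mem_thread.2 hu) (map_inr_mem_thread.2 hv)

end Br

namespace Term

variable {P : Type}

def perm : ∀ {A B : Form P}, Term P A B → ℕ → ℕ
  | _, _, .id _ => _root_.id
  | _, _, .comp g f => g.perm ∘ f.perm
  | _, _, @Term.conj _ A _ D _ f g => sumMap A.size D.size f.perm g.perm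
  | _, _, @Term.disj _ A _ D _ f g => sumMap A.size D.size f.perm g.perm
  | _, _, .bConjTo _ _ _ => _root_.id
  | _, _, .bConjFrom _ _ _ => _root_.id
  | _, _, .bDisjTo _ _ _ => _root_.id
  | _, _, .bDisjFrom _ _ _ => _root_.id
  | _, _, .cConj A B => blockSwap A.size B.size
  | _, _, .cDisj A B => blockSwap B.size A.size
  | _, _, .d _ _ _ => _root_.id

lemma bijOn_perm {A B : Form P} (f : Term P A B) : BijOn f.perm (Iio A.size) (Iio B.size) := by
  induction f with
  | id A => exact bijOn_id _
  | comp g f ihg ihf => exact ihg.comp ihf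
  | conj f g ihf ihg => exact bijOn_sumMap ihf ihg
  | disj f g ihf ihg => exact bijOn_sumMap ihf ihg
  | cConj A B => exact bijOn_blockSwap A.size B.size
  | cDisj A B => exact bijOn_blockSwap B.size A.size
  | _ => simp only [perm, Form.size, add_assoc]; exact bijOn_id _

lemma G_eq_gFun {A B : Form P} (f : Term P A B) : f.G = gFun A.size f.perm := by
  induction f with
  | comp g f ihg ihf =>
    change gComp g.G f.G = _
    rw [ihg, ihf]
    exact gComp_gFun f.bijOn_perm g.bijOn_perm.injOn
  | conj f g ihf ihg =>
    change gPar _ _ f.G g.G = _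
    rw [ihf, ihg]
    exact gPar_gFun
  | disj f g ihf ihg =>
    change gPar _ _ f.G g.G = _
    rw [ihf, ihg]
    exact gPar_gFun
  | _ => rfl

lemma linked_iff {A B : Form P} (f : Term P A B) {n m : ℕ} :
    Linked f n m ↔ n < A.size ∧ m = f.perm n := by
  rw [Linked, G_eq_gFun, gFun_inl_inr]

end Term

namespace Form

variable {P : Type}

lemma size_pos (A : Form P) : 0 < A.size := by
  induction A <;> simp only [size] <;> omega

lemma subAt_append (A : Form P) (π σ : List Dir) :
    A.subAt (π ++ σ) = (A.subAt π).bind (·.subAt σ) := by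
  induction π generalizing A with
  | nil => simp [subAt]
  | cons d π ih => cases A <;> cases d <;> simp [subAt, ih]

lemma offsetAt_append {A C : Form P} {π : List Dir} (h : A.subAt π = some C) (σ : List Dir) :
    A.offsetAt (π ++ σ) = A.offsetAt π + C.offsetAt σ := by
  induction π generalizing A with
  | nil => simp only [subAt, Option.some.injEq] at h; simp [offsetAt, h]
  | cons d π ih =>
    cases A <;> cases d <;> simp only [subAt, reduceCtorEq] at h <;>
      simp [offsetAt, ih h, add_assoc]

lemma offsetAt_add_size_le {A C : Form P} {π : List Dir} (h : A.subAt π = some C) :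
    A.offsetAt π + C.size ≤ A.size := by
  induction π generalizing A with
  | nil => simp only [subAt, Option.some.injEq] at h; simp [offsetAt, h]
  | cons d π ih =>
    cases A <;> cases d <;> simp only [subAt, reduceCtorEq] at h <;>
      simp only [offsetAt, size] <;> have := ih h <;> omega

def pathAt : Form P → ℕ → List Dir
  | .letter _, _ => []
  | .conj A B, n => if n < A.size then .l :: A.pathAt n else .r :: B.pathAt (n - A.size)
  | .disj A B, n => if n < A.size then .l :: A.pathAt n else .r :: B.pathAt (n - A.size)

lemma pathAt_offsetAt {A : Form P} {ρ : List Dir} {p : P} (h : A.subAt ρ = some (letter p)) :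
    A.pathAt (A.offsetAt ρ) = ρ := by
  induction ρ generalizing A with
  | nil => simp only [subAt, Option.some.injEq] at h; subst h; rfl
  | cons d ρ ih =>
    cases A <;> cases d <;> simp only [subAt, reduceCtorEq] at h <;>
      have := offsetAt_add_size_le h <;> simp only [size] at this <;>
      simp [pathAt, offsetAt, ih h, Nat.lt_of_succ_le this]

/-- The `n₁`-th and `n₂`-th letter occurrences lie in the left and the right
disjunct, respectively, of a disjunction occurrence. -/
def SepByDisj : Form P → ℕ → ℕ → Prop
  | .letter _, _, _ => False
  | .conj A B, n₁, n₂ =>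
      A.SepByDisj n₁ n₂ ∨ ∃ k₁ k₂, n₁ = A.size + k₁ ∧ n₂ = A.size + k₂ ∧ B.SepByDisj k₁ k₂
  | .disj A B, n₁, n₂ =>
      (n₁ < A.size ∧ ∃ k₂ < B.size, n₂ = A.size + k₂) ∨
      A.SepByDisj n₁ n₂ ∨ ∃ k₁ k₂, n₁ = A.size + k₁ ∧ n₂ = A.size + k₂ ∧ B.SepByDisj k₁ k₂

lemma SepByDisj.lt_size {A : Form P} {n₁ n₂ : ℕ} (h : A.SepByDisj n₁ n₂) :
    n₁ < A.size ∧ n₂ < A.size := by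
  induction A generalizing n₁ n₂ with
  | letter => exact h.elim
  | conj X Y ihX ihY =>
    rcases h with h | ⟨k₁, k₂, rfl, rfl, h⟩
    · have := ihX h; simp only [size]; omega
    · have := ihY h; simp only [size]; omega
  | disj X Y ihX ihY =>
    rcases h with ⟨h₁, k₂, hk₂, rfl⟩ | h | ⟨k₁, k₂, rfl, rfl, h⟩
    · simp only [size]; omega
    · have := ihX h; simp only [size]; omega
    · have := ihY h; simp only [size]; omega

lemma SepByDisj.of_subAt {A C : Form P} {π : List Dir} (hC : A.subAt π = some C)
    {n₁ n₂ : ℕ} (h : C.SepByDisj n₁ n₂) :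
    A.SepByDisj (A.offsetAt π + n₁) (A.offsetAt π + n₂) := by
  induction π generalizing A with
  | nil => simp only [subAt, Option.some.injEq] at hC; subst hC; simpa [offsetAt] using h
  | cons d π ih =>
    cases A <;> cases d <;> simp only [subAt, reduceCtorEq] at hC <;>
      simp only [offsetAt, add_assoc]
    · exact .inl (ih hC)
    · exact .inr ⟨_, _, rfl, rfl, ih hC⟩
    · exact .inr (.inl (ih hC))
    · exact .inr (.inr ⟨_, _, rfl, rfl, ih hC⟩)

lemma sepByDisj_offsetAt_of_subAt_disj {A A₁ A₂ C₁ C₂ : Form P} {π σ₁ σ₂ : List Dir}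
    (hA : A.subAt π = some (A₁ ⋎ A₂)) (h₁ : A.subAt (π ++ .l :: σ₁) = some C₁)
    (h₂ : A.subAt (π ++ .r :: σ₂) = some C₂) :
    A.SepByDisj (A.offsetAt (π ++ .l :: σ₁)) (A.offsetAt (π ++ .r :: σ₂)) := by
  simp only [subAt_append, hA, Option.bind_some, subAt] at h₁ h₂
  rw [offsetAt_append hA, offsetAt_append hA]
  refine SepByDisj.of_subAt hA (.inl ⟨?_, A₂.offsetAt σ₂, ?_, rfl⟩)
  · have := offsetAt_add_size_le h₁; have := C₁.size_pos; simp only [offsetAt]; omega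
  · have := offsetAt_add_size_le h₂; have := C₂.size_pos; omega

lemma SepByDisj.exists_pathAt {B : Form P} {m₁ m₂ : ℕ} (h : B.SepByDisj m₁ m₂) :
    ∃ (ρ : List Dir) (B₁ B₂ : Form P), B.subAt ρ = some (B₁ ⋎ B₂) ∧
      (∃ σ, B.pathAt m₁ = ρ ++ .l :: σ) ∧ (∃ σ, B.pathAt m₂ = ρ ++ .r :: σ) := by
  induction B generalizing m₁ m₂ with
  | letter => exact h.elim
  | conj X Y ihX ihY =>
    rcases h with h | ⟨k₁, k₂, rfl, rfl, h⟩
    · obtain ⟨ρ, B₁, B₂, hρ, ⟨σ₁, e₁⟩, ⟨σ₂, e₂⟩⟩ := ihX h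
      obtain ⟨h₁, h₂⟩ := h.lt_size
      exact ⟨.l :: ρ, B₁, B₂, hρ, ⟨σ₁, by simp [pathAt, h₁, e₁]⟩, ⟨σ₂, by simp [pathAt, h₂, e₂]⟩⟩
    · obtain ⟨ρ, B₁, B₂, hρ, ⟨σ₁, e₁⟩, ⟨σ₂, e₂⟩⟩ := ihY h
      exact ⟨.r :: ρ, B₁, B₂, hρ, ⟨σ₁, by simp [pathAt, e₁]⟩, ⟨σ₂, by simp [pathAt, e₂]⟩⟩
  | disj X Y ihX ihY =>
    rcases h with ⟨h₁, k₂, -, rfl⟩ | h | ⟨k₁, k₂, rfl, rfl, h⟩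
    · exact ⟨[], X, Y, rfl, ⟨X.pathAt m₁, by simp [pathAt, h₁]⟩, ⟨Y.pathAt k₂, by simp [pathAt]⟩⟩
    · obtain ⟨ρ, B₁, B₂, hρ, ⟨σ₁, e₁⟩, ⟨σ₂, e₂⟩⟩ := ihX h
      obtain ⟨h₁, h₂⟩ := h.lt_size
      exact ⟨.l :: ρ, B₁, B₂, hρ, ⟨σ₁, by simp [pathAt, h₁, e₁]⟩, ⟨σ₂, by simp [pathAt, h₂, e₂]⟩⟩
    · obtain ⟨ρ, B₁, B₂, hρ, ⟨σ₁, e₁⟩, ⟨σ₂, e₂⟩⟩ := ihY h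
      exact ⟨.r :: ρ, B₁, B₂, hρ, ⟨σ₁, by simp [pathAt, e₁]⟩, ⟨σ₂, by simp [pathAt, e₂]⟩⟩

lemma SepByDisj.exists_disj_of_subAt_letter {B : Form P} {ρ₁ ρ₂ : List Dir} {p₁ p₂ : P}
    (hy₁ : B.subAt ρ₁ = some (letter p₁)) (hy₂ : B.subAt ρ₂ = some (letter p₂))
    (h : B.SepByDisj (B.offsetAt ρ₁) (B.offsetAt ρ₂)) :
    ∃ (ρ : List Dir) (B₁ B₂ : Form P), B.subAt ρ = some (B₁ ⋎ B₂) ∧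
      (∃ σ, ρ₁ = ρ ++ .l :: σ) ∧ (∃ σ, ρ₂ = ρ ++ .r :: σ) := by
  simpa only [pathAt_offsetAt hy₁, pathAt_offsetAt hy₂] using h.exists_pathAt

variable {A B C : Form P}

lemma sepByDisj_conj_assoc {n₁ n₂ : ℕ} :
    (A ⋏ (B ⋏ C)).SepByDisj n₁ n₂ ↔ ((A ⋏ B) ⋏ C).SepByDisj n₁ n₂ := by
  constructor
  · rintro (h | ⟨k₁, k₂, rfl, rfl, h | ⟨l₁, l₂, rfl, rfl, h⟩⟩)
    · exact .inl (.inl h)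
    · exact .inl (.inr ⟨k₁, k₂, rfl, rfl, h⟩)
    · exact .inr ⟨l₁, l₂, (add_assoc _ _ _).symm, (add_assoc _ _ _).symm, h⟩
  · rintro ((h | ⟨k₁, k₂, rfl, rfl, h⟩) | ⟨l₁, l₂, rfl, rfl, h⟩)
    · exact .inl h
    · exact .inr ⟨k₁, k₂, rfl, rfl, .inl h⟩
    · exact .inr ⟨_, _, add_assoc _ _ _, add_assoc _ _ _, .inr ⟨l₁, l₂, rfl, rfl, h⟩⟩

lemma sepByDisj_disj_assoc {n₁ n₂ : ℕ} :
    (A ⋎ (B ⋎ C)).SepByDisj n₁ n₂ ↔ ((A ⋎ B) ⋎ C).SepByDisj n₁ n₂ := by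
  simp only [SepByDisj, size]
  constructor
  · rintro (⟨h₁, k, hk, rfl⟩ | h | ⟨k₁, k₂, rfl, rfl, ⟨h₁, l, hl, rfl⟩ | h | ⟨l₁, l₂, rfl, rfl, h⟩⟩)
    · by_cases hkB : k < B.size
      · exact .inr (.inl (.inl ⟨h₁, k, hkB, rfl⟩))
      · exact .inl ⟨by omega, k - B.size, by omega, by omega⟩
    · exact .inr (.inl (.inr (.inl h)))
    · exact .inl ⟨by omega, l, hl, by omega⟩
    · exact .inr (.inl (.inr (.inr ⟨k₁, k₂, rfl, rfl, h⟩)))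
    · exact .inr (.inr ⟨l₁, l₂, by omega, by omega, h⟩)
  · rintro (⟨h₁, l, hl, rfl⟩ | (⟨h₁, k, hk, rfl⟩ | h | ⟨k₁, k₂, rfl, rfl, h⟩) |
      ⟨l₁, l₂, rfl, rfl, h⟩)
    · by_cases hn₁ : n₁ < A.size
      · exact .inl ⟨hn₁, B.size + l, by omega, by omega⟩
      · exact .inr (.inr ⟨n₁ - A.size, B.size + l, by omega, by omega,
          .inl ⟨by omega, l, hl, rfl⟩⟩)
    · exact .inl ⟨h₁, k, by omega, rfl⟩
    · exact .inr (.inl h)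
    · exact .inr (.inr ⟨k₁, k₂, rfl, rfl, .inr (.inl h)⟩)
    · exact .inr (.inr ⟨B.size + l₁, B.size + l₂, by omega, by omega,
        .inr (.inr ⟨l₁, l₂, rfl, rfl, h⟩)⟩)

lemma SepByDisj.d {n₁ n₂ : ℕ} (h : (A ⋏ (B ⋎ C)).SepByDisj n₁ n₂) :
    ((A ⋏ B) ⋎ C).SepByDisj n₁ n₂ := by
  simp only [SepByDisj, size] at h ⊢
  rcases h with h | ⟨k₁, k₂, rfl, rfl, ⟨h₁, l, hl, rfl⟩ | h | ⟨l₁, l₂, rfl, rfl, h⟩⟩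
  · exact .inr (.inl (.inl h))
  · exact .inl ⟨by omega, l, hl, by omega⟩
  · exact .inr (.inl (.inr ⟨k₁, k₂, rfl, rfl, h⟩))
  · exact .inr (.inr ⟨l₁, l₂, by omega, by omega, h⟩)

end Form

section Preservation

variable {P : Type}

def PreservesSep (A B : Form P) (φ : ℕ → ℕ) : Prop :=
  ∀ ⦃n₁ n₂⦄, A.SepByDisj n₁ n₂ → B.SepByDisj (φ n₁) (φ n₂) ∨ B.SepByDisj (φ n₂) (φ n₁)

variable {A B C D E : Form P} {φ ψ : ℕ → ℕ}

lemma PreservesSep.of_imp (h : ∀ ⦃n₁ n₂⦄, A.SepByDisj n₁ n₂ → B.SepByDisj n₁ n₂) :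
    PreservesSep A B id :=
  fun _ _ hn => .inl (h hn)

lemma PreservesSep.comp (hψ : PreservesSep B C ψ) (hφ : PreservesSep A B φ) :
    PreservesSep A C (ψ ∘ φ) := by
  intro n₁ n₂ h
  rcases hφ h with h | h
  · exact hψ h
  · exact (hψ h).symm

lemma PreservesSep.conj (hφ : PreservesSep A D φ) (hψ : PreservesSep B E ψ) :
    PreservesSep (A ⋏ B) (D ⋏ E) (sumMap A.size D.size φ ψ) := by
  rintro n₁ n₂ (h | ⟨k₁, k₂, rfl, rfl, h⟩)
  · obtain ⟨h₁, h₂⟩ := h.lt_size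
    rw [sumMap_of_lt h₁, sumMap_of_lt h₂]
    exact (hφ h).imp .inl .inl
  · rw [sumMap_add, sumMap_add]
    exact (hψ h).imp (fun h => .inr ⟨_, _, rfl, rfl, h⟩) (fun h => .inr ⟨_, _, rfl, rfl, h⟩)

lemma PreservesSep.disj (hφ : PreservesSep A D φ) (hψ : PreservesSep B E ψ)
    (hφA : MapsTo φ (Iio A.size) (Iio D.size)) (hψB : MapsTo ψ (Iio B.size) (Iio E.size)) :
    PreservesSep (A ⋎ B) (D ⋎ E) (sumMap A.size D.size φ ψ) := by
  rintro n₁ n₂ (⟨h₁, k₂, hk₂, rfl⟩ | h)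
  · rw [sumMap_of_lt h₁, sumMap_add]
    exact .inl (.inl ⟨hφA h₁, ψ k₂, hψB hk₂, rfl⟩)
  · exact ((hφ.conj hψ) h).imp .inr .inr

lemma preservesSep_cConj : PreservesSep (A ⋏ B) (B ⋏ A) (blockSwap A.size B.size) := by
  rintro n₁ n₂ (h | ⟨k₁, k₂, rfl, rfl, h⟩)
  · obtain ⟨h₁, h₂⟩ := h.lt_size
    rw [blockSwap_of_lt h₁, blockSwap_of_lt h₂]
    exact .inl (.inr ⟨n₁, n₂, add_comm _ _, add_comm _ _, h⟩)
  · rw [blockSwap_add, blockSwap_add]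
    exact .inl (.inl h)

lemma preservesSep_cDisj : PreservesSep (B ⋎ A) (A ⋎ B) (blockSwap B.size A.size) := by
  rintro n₁ n₂ (⟨h₁, k₂, hk₂, rfl⟩ | h)
  · rw [blockSwap_of_lt h₁, blockSwap_add]
    exact .inr (.inl ⟨hk₂, n₁, h₁, add_comm _ _⟩)
  · exact (preservesSep_cConj h).imp .inr .inr

lemma Term.preservesSep_perm (f : Term P A B) : PreservesSep A B f.perm := by
  induction f with
  | id A => exact .of_imp fun _ _ h => h
  | comp g f ihg ihf => exact ihg.comp ihf
  | conj f g ihf ihg => exact ihf.conj ihg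
  | disj f g ihf ihg => exact ihf.disj ihg f.bijOn_perm.mapsTo g.bijOn_perm.mapsTo
  | bConjTo A B C => exact .of_imp fun _ _ => Form.sepByDisj_conj_assoc.1
  | bConjFrom A B C => exact .of_imp fun _ _ => Form.sepByDisj_conj_assoc.2
  | bDisjTo A B C => exact .of_imp fun _ _ => Form.sepByDisj_disj_assoc.1
  | bDisjFrom A B C => exact .of_imp fun _ _ => Form.sepByDisj_disj_assoc.2
  | cConj A B => exact preservesSep_cConj
  | cDisj A B => exact preservesSep_cDisj
  | d A B C => exact .of_imp fun _ _ => Form.SepByDisj.d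

end Preservation

/-- **Lemma 3D**: let `f : A ⊢ B` be an arrow term of DS, and for `i ∈ {1,2}` let
`x_i` in `A` and `y_i` in `B` be occurrences of the letter `p_i` that are linked
in `f`. If `A` has a subformula occurrence `A₁ ∨ A₂` such that `x_i` occurs in
`A_i`, then `B` has a subformula occurrence `B₁ ∨ B₂` or `B₂ ∨ B₁` such that
`y_i` occurs in `B_i`. -/
theorem lemma_3D {P : Type} {A B : Form P} (f : Term P A B) (p₁ p₂ : P)
    (π₁ π₂ ρ₁ ρ₂ : List Dir)
    (hx₁ : A.subAt π₁ = some (Form.letter p₁)) (hx₂ : A.subAt π₂ = some (Form.letter p₂))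
    (hy₁ : B.subAt ρ₁ = some (Form.letter p₁)) (hy₂ : B.subAt ρ₂ = some (Form.letter p₂))
    (hl₁ : Linked f (A.offsetAt π₁) (B.offsetAt ρ₁))
    (hl₂ : Linked f (A.offsetAt π₂) (B.offsetAt ρ₂))
    (π : List Dir) (A₁ A₂ : Form P)
    (hsub : A.subAt π = some (A₁ ⋎ A₂))
    (h₁ : ∃ σ, π₁ = π ++ (Dir.l :: σ)) (h₂ : ∃ σ, π₂ = π ++ (Dir.r :: σ)) :
    ∃ (ρ : List Dir) (B₁ B₂ : Form P), B.subAt ρ = some (B₁ ⋎ B₂) ∧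
      (((∃ σ, ρ₁ = ρ ++ (Dir.l :: σ)) ∧ (∃ σ, ρ₂ = ρ ++ (Dir.r :: σ))) ∨
       ((∃ σ, ρ₂ = ρ ++ (Dir.l :: σ)) ∧ (∃ σ, ρ₁ = ρ ++ (Dir.r :: σ)))) := by
  obtain ⟨σ₁, rfl⟩ := h₁
  obtain ⟨σ₂, rfl⟩ := h₂
  have hsepA := Form.sepByDisj_offsetAt_of_subAt_disj hsub hx₁ hx₂
  obtain ⟨-, e₁⟩ := f.linked_iff.1 hl₁
  obtain ⟨-, e₂⟩ := f.linked_iff.1 hl₂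
  have hsepB := f.preservesSep_perm hsepA
  rw [← e₁, ← e₂] at hsepB
  rcases hsepB with hsepB | hsepB
  · obtain ⟨ρ, B₁, B₂, hρ, hρ₁, hρ₂⟩ := hsepB.exists_disj_of_subAt_letter hy₁ hy₂
    exact ⟨ρ, B₁, B₂, hρ, .inl ⟨hρ₁, hρ₂⟩⟩
  · obtain ⟨ρ, B₁, B₂, hρ, hρ₂, hρ₁⟩ := hsepB.exists_disj_of_subAt_letter hy₂ hy₁
    exact ⟨ρ, B₁, B₂, hρ, .inr ⟨hρ₂, hρ₁⟩⟩
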